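/- One has 2·v(5) > v(6), where v(x) = (x/2)·(2Λ(θ_x) + Λ(θ_x + π/x) + Λ(θ_x − π/x) − Λ(2θ_x − π/2)); that is, twice the hyperbolic volume of the right-angled dodecahedron L(5) strictly exceeds the hyperbolic volume of the Löbell polyhedron L(6). (This is the key inequality showing that any composition of two copies of L(5) has volume larger than L(6).) -/

import Mathlib

/-!
Since `v(x) = (x/2) g(x)`, the claim is `5 g(5) > 3 g(6)`, and the margin is wide (`8.61` against
`6.02`). On `(0, √2]` the bounds `t - t³/6 ≤ sin t ≤ t` put the integrand `log (2 sin t)` between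
`log (2t) - t²/4` and `log (2t)`, so `Λ z` lies between `z - z log (2z)` and that plus `z³/12`.
The concave function `z - z log (2z)` is then estimated on both sides through
`1 - c/z ≤ log (z/c) ≤ z/c - 1` at dyadic points `c`, where `log (2c)` is an integer multiple of
`log 2`. With `θ₅ = arcsin ((√5 - 1)/2)` and `θ₆ = arcsin (1/√3)` located to within `0.004` by
the Taylor bounds of `sin`, the eight values of `Λ` give `g(5) > 7/5` and `g(6) < 11/5`.
-/

/-- The Lobachevsky function `Λ(z) = -∫₀^z log |2 sin t| dt`. -/
noncomputable def lob (z : ℝ) : ℝ := -∫ t in (0:ℝ)..z, Real.log |2 * Real.sin t|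

/-- `θ_x = π/2 - arccos (1 / (2 cos (π/x)))`. -/
noncomputable def theta (x : ℝ) : ℝ :=
  Real.pi / 2 - Real.arccos (1 / (2 * Real.cos (Real.pi / x)))

/-- `g(x) = 2Λ(θ_x) + Λ(θ_x + π/x) + Λ(θ_x − π/x) − Λ(2θ_x − π/2)`. -/
noncomputable def lobG (x : ℝ) : ℝ :=
  2 * lob (theta x) + lob (theta x + Real.pi / x) + lob (theta x - Real.pi / x)
    - lob (2 * theta x - Real.pi / 2)

/-- `v(x) = (x/2) · g(x)`, the volume of the Löbell polyhedron `L(x)` for integer `x ≥ 5`. -/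
noncomputable def lobV (x : ℝ) : ℝ := x / 2 * lobG x

open Real Set intervalIntegral

lemma lob_neg (z : ℝ) : lob (-z) = -lob z := by
  have h := integral_comp_neg (a := 0) (b := z) fun t => log |2 * sin t|
  simp only [sin_neg, mul_neg, abs_neg, neg_zero] at h
  rw [lob, lob, neg_inj, h, integral_symm]

lemma lobG_eq (x : ℝ) : lobG x = 2 * lob (theta x) + lob (theta x + π / x)
    + lob (theta x - π / x) + lob (π / 2 - 2 * theta x) := by
  rw [lobG, show 2 * theta x - π / 2 = -(π / 2 - 2 * theta x) by ring, lob_neg]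
  ring

lemma intervalIntegrable_log_abs_two_mul_sin (a b : ℝ) :
    IntervalIntegrable (fun t => log |2 * sin t|) MeasureTheory.volume a b :=
  ((analyticOnNhd_const.mul analyticOnNhd_sin).meromorphicOn).intervalIntegrable_log_norm

lemma integral_log_two_add_log {z : ℝ} (hz : 0 < z) :
    ∫ t in 0..z, (log 2 + log t) = z * log (2 * z) - z := by
  rw [integral_add intervalIntegrable_const intervalIntegrable_log', integral_const,
    integral_log_from_zero, log_mul two_ne_zero hz.ne', smul_eq_mul]
  ring

lemma log_abs_two_mul_sin_le {t : ℝ} (ht : 0 < t) (htπ : t < π) :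
    log |2 * sin t| ≤ log 2 + log t := by
  have hsin := sin_pos_of_pos_of_lt_pi ht htπ
  rw [log_abs, ← log_mul two_ne_zero ht.ne']
  exact log_le_log (by positivity) (by linarith [sin_le ht.le])

lemma log_two_add_log_sub_le_log_abs_two_mul_sin {t : ℝ} (ht : 0 < t) (ht2 : t ^ 2 ≤ 2) :
    log 2 + log t - t ^ 2 / 4 ≤ log |2 * sin t| := by
  have hu : 0 < 1 - t ^ 2 / 6 := by linarith
  have hlog_u : -(t ^ 2 / 4) ≤ log (1 - t ^ 2 / 6) := by
    refine le_trans ?_ (one_sub_inv_le_log_of_pos hu)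
    have : (1 - t ^ 2 / 6)⁻¹ ≤ 1 + t ^ 2 / 4 := by
      rw [inv_le_iff_one_le_mul₀' hu]; nlinarith
    linarith
  have hsin : 2 * t * (1 - t ^ 2 / 6) ≤ 2 * sin t := by nlinarith [sin_ge_sub_cube ht.le]
  rw [log_abs]
  calc log 2 + log t - t ^ 2 / 4 ≤ log (2 * t * (1 - t ^ 2 / 6)) := by
        rw [log_mul (by positivity) hu.ne', log_mul two_ne_zero ht.ne']; linarith
    _ ≤ log (2 * sin t) := log_le_log (by positivity) hsin

lemma sub_mul_log_two_mul_le_lob {z : ℝ} (hz : 0 < z) (hzπ : z ≤ π) :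
    z - z * log (2 * z) ≤ lob z := by
  have h := integral_mono_on_of_le_Ioo hz.le (intervalIntegrable_log_abs_two_mul_sin 0 z)
    (intervalIntegrable_const.add intervalIntegrable_log')
    fun t ht => log_abs_two_mul_sin_le ht.1 (ht.2.trans_le hzπ)
  rw [integral_log_two_add_log hz] at h
  rw [lob]; linarith

lemma lob_le_sub_mul_log_two_mul_add {z : ℝ} (hz : 0 < z) (hz2 : z ^ 2 ≤ 2) :
    lob z ≤ z - z * log (2 * z) + z ^ 3 / 12 := by
  have h := integral_mono_on_of_le_Ioo hz.le
    ((intervalIntegrable_const.add intervalIntegrable_log').sub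
      (((continuous_pow 2).div_const 4).intervalIntegrable 0 z))
    (intervalIntegrable_log_abs_two_mul_sin 0 z)
    fun t ht => log_two_add_log_sub_le_log_abs_two_mul_sin ht.1
      (by nlinarith [ht.1, ht.2])
  rw [integral_sub (intervalIntegrable_const.add intervalIntegrable_log')
    (((continuous_pow 2).div_const 4).intervalIntegrable 0 z), integral_log_two_add_log hz,
    integral_div, integral_pow] at h
  rw [lob]; linarith

-- Both sides of `1 - c/z ≤ log (z/c) ≤ z/c - 1` at the dyadic point `c = 2 ^ k / 2`.
lemma le_lob_dyadic (k : ℤ) {z : ℝ} (hz : 0 < z) (hzπ : z ≤ π) :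
    z * (2 - k * log 2 - 2 * z / 2 ^ k) ≤ lob z := by
  have h2k : (0 : ℝ) < 2 ^ k := zpow_pos two_pos k
  have hlog := log_le_sub_one_of_pos (div_pos (mul_pos two_pos hz) h2k)
  rw [log_div (by positivity) h2k.ne', log_zpow] at hlog
  nlinarith [sub_mul_log_two_mul_le_lob hz hzπ]

lemma lob_le_dyadic (k : ℤ) {z : ℝ} (hz : 0 < z) (hz2 : z ^ 2 ≤ 2) :
    lob z ≤ 2 ^ k / 2 - k * z * log 2 + z ^ 3 / 12 := by
  have h2k : (0 : ℝ) < 2 ^ k := zpow_pos two_pos k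
  have hlog := one_sub_inv_le_log_of_pos (div_pos (mul_pos two_pos hz) h2k)
  rw [log_div (by positivity) h2k.ne', log_zpow, inv_div] at hlog
  have : z * (2 ^ k / (2 * z)) = 2 ^ k / 2 := by field_simp
  nlinarith [lob_le_sub_mul_log_two_mul_add hz hz2]

lemma arcsin_mem_Icc_of_cubic_bounds {a b s : ℝ} (ha : 0 ≤ a) (hab : a ≤ b) (hb : b ≤ 1)
    (has : a - a ^ 3 / 6 + a ^ 5 / 100 ≤ s) (hsb : s ≤ b - b ^ 3 / 6) : arcsin s ∈ Icc a b := by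
  have hπ := pi_gt_three
  have hs : s ∈ Icc (-1) 1 :=
    ⟨by linarith [pow_le_one₀ ha (hab.trans hb) (n := 3), pow_nonneg ha 5],
      by linarith [pow_nonneg (ha.trans hab) 3]⟩
  have hsin_a := (abs_le.1 (sin_bound (x := a) (by rw [abs_of_nonneg ha]; linarith))).2
  rw [abs_of_nonneg ha] at hsin_a
  refine ⟨(le_arcsin_iff_sin_le ⟨by linarith, by linarith⟩ hs).2 (by linarith),
    (arcsin_le_iff_le_sin hs ⟨by linarith, by linarith⟩).2
      (hsb.trans (sin_ge_sub_cube (ha.trans hab)))⟩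

lemma theta_eq_arcsin (x : ℝ) : theta x = arcsin (1 / (2 * cos (π / x))) := by
  rw [theta, arccos_eq_pi_div_two_sub_arcsin]
  ring

lemma theta_five_mem : theta 5 ∈ Icc 0.664 0.668 := by
  have h5 : √5 ^ 2 = 5 := sq_sqrt (by norm_num)
  have h5lo : 2.236 ≤ √5 := by nlinarith [sqrt_nonneg 5]
  have h5hi : √5 ≤ 2.2361 := by nlinarith [sqrt_nonneg 5]
  have hs : 1 / (2 * ((1 + √5) / 4)) = (√5 - 1) / 2 := by
    field_simp; linarith
  rw [theta_eq_arcsin, cos_pi_div_five, hs]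
  apply arcsin_mem_Icc_of_cubic_bounds <;> norm_num <;> linarith

lemma theta_six_mem : theta 6 ∈ Icc 0.613 0.617 := by
  have h3 : √3 ^ 2 = 3 := sq_sqrt (by norm_num)
  have h3lo : 1.732 ≤ √3 := by nlinarith [sqrt_nonneg 3]
  have h3hi : √3 ≤ 1.7321 := by nlinarith [sqrt_nonneg 3]
  have hs : 1 / (2 * (√3 / 2)) = √3 / 3 := by
    field_simp; linarith
  rw [theta_eq_arcsin, cos_pi_div_six, hs]
  apply arcsin_mem_Icc_of_cubic_bounds <;> norm_num <;> linarith

lemma lobG_five_gt : 7 / 5 < lobG 5 := by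
  obtain ⟨hθ₁, hθ₂⟩ := theta_five_mem
  have hπ₁ := pi_gt_d4
  have hπ₂ := pi_lt_d4
  have hl₁ := log_two_gt_d9
  have hl₂ := log_two_lt_d9
  have h₁ := le_lob_dyadic 0 (z := theta 5) (by linarith) (by linarith)
  have h₂ := le_lob_dyadic 1 (z := theta 5 + π / 5) (by linarith) (by linarith)
  have h₃ := le_lob_dyadic (-3) (z := theta 5 - π / 5) (by linarith) (by linarith)
  have h₄ := le_lob_dyadic (-1) (z := π / 2 - 2 * theta 5) (by linarith) (by linarith)
  norm_num at h₁ h₂ h₃ h₄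
  have e₁ : 0.44 ≤ lob (theta 5) := by nlinarith
  have e₂ : 0.01 ≤ lob (theta 5 + π / 5) := by nlinarith
  have e₃ : 0.12 ≤ lob (theta 5 - π / 5) := by nlinarith
  have e₄ : 0.4 ≤ lob (π / 2 - 2 * theta 5) := by nlinarith
  rw [lobG_eq]
  linarith

lemma lobG_six_lt : lobG 6 < 11 / 5 := by
  obtain ⟨hθ₁, hθ₂⟩ := theta_six_mem
  have hπ₁ := pi_gt_d4
  have hπ₂ := pi_lt_d4
  have hl₁ := log_two_gt_d9
  have hl₂ := log_two_lt_d9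
  have h₁ := lob_le_dyadic 0 (z := theta 6) (by linarith) (by nlinarith)
  have h₂ := lob_le_dyadic 1 (z := theta 6 + π / 6) (by linarith) (by nlinarith)
  have h₃ := lob_le_dyadic (-2) (z := theta 6 - π / 6) (by linarith) (by nlinarith)
  have h₄ := lob_le_dyadic 0 (z := π / 2 - 2 * theta 6) (by linarith) (by nlinarith)
  norm_num at h₁ h₂ h₃ h₄
  have e₁ : lob (theta 6) ≤ 0.52 := by
    nlinarith [pow_le_pow_left₀ (by linarith) hθ₂ 3]
  have e₂ : lob (theta 6 + π / 6) ≤ 0.34 := by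
    nlinarith [pow_le_pow_left₀ (by linarith) (show theta 6 + π / 6 ≤ 1.141 by linarith) 3]
  have e₃ : lob (theta 6 - π / 6) ≤ 0.26 := by
    nlinarith [pow_le_pow_left₀ (by linarith) (show theta 6 - π / 6 ≤ 0.1 by linarith) 3]
  have e₄ : lob (π / 2 - 2 * theta 6) ≤ 0.51 := by
    nlinarith [pow_le_pow_left₀ (by linarith) (show π / 2 - 2 * theta 6 ≤ 0.35 by linarith) 3]
  rw [lobG_eq]
  linarith

/-- Twice the volume of the right-angled dodecahedron `L(5)` strictly exceeds the volume
of the Löbell polyhedron `L(6)`. -/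
theorem two_vol_dodecahedron_gt_vol_lobell_six : 2 * lobV 5 > lobV 6 := by
  rw [lobV, lobV]
  linarith [lobG_five_gt, lobG_six_lt]
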